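/- The map S : (ℂ²)⁴ → (ℂ²)⁴ given by S(x₁,x₂,y₁,y₂,z₁,z₂,t₁,t₂) = (x₁y₁/(x₁y₁ + z₁ − x₁z₁), t₁x₂y₂/(y₂ + t₁x₂ − x₂), x₁y₁ + z₁ − x₁z₁, y₂, z₁, t₂, (y₂ + t₁x₂ − x₂)/y₂, z₂) is a 4-simplex map, i.e. it satisfies the 4-simplex equation at every point of (ℂ²)^{10} at which all denominators occurring in both composed sides are nonzero. -/

import Mathlib

noncomputable section

namespace Paper4Simplex

variable {X : Type*}

/-- Quadruples over `X`. -/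
abbrev Q (X : Type*) : Type _ := X × X × X × X

/-- 10-tuples over `X`. -/
abbrev P (X : Type*) : Type _ := X × X × X × X × X × X × X × X × X × X

/-- `S` acting on coordinates 1,2,3,4 of a 10-tuple. -/
def app1234 (S : Q X → Q X) : P X → P X := fun p =>
  match p with
  | (a,b,c,d,e,f,g,h,i,j) =>
    match S (a,b,c,d) with
    | (A,B,C,D) => (A,B,C,D,e,f,g,h,i,j)

/-- `S` acting on coordinates 1,5,6,7 of a 10-tuple. -/
def app1567 (S : Q X → Q X) : P X → P X := fun p =>
  match p with
  | (a,b,c,d,e,f,g,h,i,j) =>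
    match S (a,e,f,g) with
    | (A,E,F,G) => (A,b,c,d,E,F,G,h,i,j)

/-- `S` acting on coordinates 2,5,8,9 of a 10-tuple. -/
def app2589 (S : Q X → Q X) : P X → P X := fun p =>
  match p with
  | (a,b,c,d,e,f,g,h,i,j) =>
    match S (b,e,h,i) with
    | (B,E,H,I) => (a,B,c,d,E,f,g,H,I,j)

/-- `S` acting on coordinates 3,6,8,10 of a 10-tuple. -/
def app368X (S : Q X → Q X) : P X → P X := fun p =>
  match p with
  | (a,b,c,d,e,f,g,h,i,j) =>
    match S (c,f,h,j) with
    | (C,F,H,J) => (a,b,C,d,e,F,g,H,i,J)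

/-- `S` acting on coordinates 4,7,9,10 of a 10-tuple. -/
def app479X (S : Q X → Q X) : P X → P X := fun p =>
  match p with
  | (a,b,c,d,e,f,g,h,i,j) =>
    match S (d,g,i,j) with
    | (D,G,I,J) => (a,b,c,D,e,f,G,h,I,J)

def proj1234 : P X → Q X := fun p => match p with
  | (a,b,c,d,_,_,_,_,_,_) => (a,b,c,d)

def proj1567 : P X → Q X := fun p => match p with
  | (a,_,_,_,e,f,g,_,_,_) => (a,e,f,g)

def proj2589 : P X → Q X := fun p => match p with
  | (_,b,_,_,e,_,_,h,i,_) => (b,e,h,i)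

def proj368X : P X → Q X := fun p => match p with
  | (_,_,c,_,_,f,_,h,_,j) => (c,f,h,j)

def proj479X : P X → Q X := fun p => match p with
  | (_,_,_,d,_,_,g,_,i,j) => (d,g,i,j)

/-- Left-hand side of the 4-simplex equation. -/
def lhs (S : Q X → Q X) : P X → P X :=
  app1234 S ∘ app1567 S ∘ app2589 S ∘ app368X S ∘ app479X S

/-- Right-hand side of the 4-simplex equation. -/
def rhs (S : Q X → Q X) : P X → P X :=
  app479X S ∘ app368X S ∘ app2589 S ∘ app1567 S ∘ app1234 S

/-- All denominators occurring on the left-hand side composition are nonzero: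
`D` holds at each quadruple to which `S` is applied. -/
def lhsDom (D : Q X → Prop) (S : Q X → Q X) (p : P X) : Prop :=
  D (proj479X p) ∧
  D (proj368X (app479X S p)) ∧
  D (proj2589 (app368X S (app479X S p))) ∧
  D (proj1567 (app2589 S (app368X S (app479X S p)))) ∧
  D (proj1234 (app1567 S (app2589 S (app368X S (app479X S p)))))

/-- All denominators occurring on the right-hand side composition are nonzero. -/
def rhsDom (D : Q X → Prop) (S : Q X → Q X) (p : P X) : Prop :=
  D (proj1234 p) ∧
  D (proj1567 (app1234 S p)) ∧
  D (proj2589 (app1567 S (app1234 S p))) ∧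
  D (proj368X (app2589 S (app1567 S (app1234 S p)))) ∧
  D (proj479X (app368X S (app2589 S (app1567 S (app1234 S p)))))


/-! Case c of the Kashaev–Korepanov–Sergeev type 4-simplex maps. -/

abbrev C2 : Type := ℂ × ℂ

/-- The 4-simplex map of case c. -/
def Sc : Q C2 → Q C2 := fun q =>
  match q with
  | ((x1,x2),(y1,y2),(z1,z2),(t1,t2)) =>
    ((x1*y1/(x1*y1 + z1 - x1*z1), t1*x2*y2/(y2 + t1*x2 - x2)),
     (x1*y1 + z1 - x1*z1, y2),
     (z1, t2),
     ((y2 + t1*x2 - x2)/y2, z2))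

/-- Nonvanishing of the denominators of `Sc`. -/
def DomC : Q C2 → Prop := fun q =>
  match q with
  | ((x1,x2),(y1,y2),(z1,_),(t1,_)) =>
    x1*y1 + z1 - x1*z1 ≠ 0 ∧ y2 + t1*x2 - x2 ≠ 0 ∧ y2 ≠ 0

/-!
On first components of its first three arguments `Sc` acts by
`(x, y, z) ↦ (x y / w, w, z)` with `w = lerp x y z = x y + (1 - x) z`, on `(x₂, y₂, t₁)` by
`(x, y, t) ↦ (t x y / n, y, n / y)` with `n = shear x y t = y + (t - 1) x`, and it swaps `z₂`
and `t₂`. Fourteen of the twenty coordinates of the two sides of the 4-simplex equation then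
agree on the nose. The other six are rational identities: three in the first components of
slots 1, 2, 3, 5, 6, 8 (the tetrahedron equation of the first map) and three coupling the second
components of slots 1, 2, 5 with the first components of slots 4, 7, 9. In each triple the
identity for the new `x`-coordinate is a corollary of the computation behind the others, because
both maps preserve a product (`x y`, resp. `t x`).
-/

section RationalIdentities

variable {K : Type*} [Field K]

def lerp (x y z : K) : K := x * y + z - x * z

def shear (x y t : K) : K := y + t * x - x

theorem lerp_sub_mul (x y z : K) : lerp x y z - x * y = (1 - x) * z := by
  unfold lerp; ring

theorem lerp_lerp_lerp (a b c e f h : K) (hk : lerp a b c ≠ 0) :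
    lerp a (lerp b e h) (lerp c f h) = lerp (lerp a b c) (lerp (a * b / lerp a b c) e f) h := by
  unfold lerp at *
  field_simp
  ring

theorem lerp_div_div_div (a b c e f h : K) (hk : lerp a b c ≠ 0) (hB : lerp b e h ≠ 0)
    (hC : lerp c f h ≠ 0) (hE : lerp a (lerp b e h) (lerp c f h) ≠ 0) :
    lerp (a * lerp b e h / lerp a (lerp b e h) (lerp c f h)) (b * e / lerp b e h)
        (c * f / lerp c f h) =
      lerp a b c * lerp (a * b / lerp a b c) e f /
        lerp (lerp a b c) (lerp (a * b / lerp a b c) e f) h := by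
  rw [← lerp_lerp_lerp a b c e f h hk, eq_div_iff hE]
  set B := lerp b e h
  set C := lerp c f h
  set E := lerp a B C
  calc lerp (a * B / E) (b * e / B) (c * f / C) * E
      = a * b * e + (E - a * B) * (c * f / C) := by unfold lerp; field_simp; ring
    _ = a * b * e + (1 - a) * c * f := by rw [lerp_sub_mul]; field_simp
    _ = lerp a b c * lerp (a * b / lerp a b c) e f := by unfold lerp at *; field_simp; ring

theorem mul_div_lerp_div_div_div (a b c e f h : K) (hk : lerp a b c ≠ 0)
    (hB : lerp b e h ≠ 0) (hC : lerp c f h ≠ 0) (hE : lerp a (lerp b e h) (lerp c f h) ≠ 0) :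
    a * lerp b e h / lerp a (lerp b e h) (lerp c f h) * (b * e / lerp b e h) /
        lerp (a * lerp b e h / lerp a (lerp b e h) (lerp c f h)) (b * e / lerp b e h)
          (c * f / lerp c f h) =
      a * b / lerp a b c * e / lerp (a * b / lerp a b c) e f := by
  rw [lerp_div_div_div a b c e f h hk hB hC hE, ← lerp_lerp_lerp a b c e f h hk]
  field_simp

theorem shear_div_eq_lerp (a b e d g i : K) (hb : b ≠ 0) (hm : shear a b d ≠ 0) :
    shear a e (lerp d g i) / e =
      lerp (shear a b d / b) (shear (d * a * b / shear a b d) e g / e) (shear b e i / e) := by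
  unfold lerp shear at *
  field_simp
  ring

theorem shear_div_div_div_mul (a b e d g i : K) (hm : shear a b d ≠ 0) (hR : lerp d g i ≠ 0)
    (hn₁ : shear b e i ≠ 0) (hn₂ : shear a e (lerp d g i) ≠ 0) :
    shear (lerp d g i * a * e / shear a e (lerp d g i)) (i * b * e / shear b e i)
        (d * g / lerp d g i) * (b * shear a e (lerp d g i)) =
      i * b * e / shear b e i * shear a b d * shear (d * a * b / shear a b d) e g := by
  set R := lerp d g i with hR'
  set n₁ := shear b e i with hn₁'
  set n₂ := shear a e R with hn₂'
  set m := shear a b d with hm'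
  unfold shear at *
  field_simp
  simp only [hR', hn₁', hn₂', hm', lerp]
  ring

theorem shear_div_div_div_div (a b e d g i : K) (hb : b ≠ 0) (he : e ≠ 0) (hi : i ≠ 0)
    (hm : shear a b d ≠ 0) (hR : lerp d g i ≠ 0) (hn₁ : shear b e i ≠ 0)
    (hn₂ : shear a e (lerp d g i) ≠ 0) :
    shear (lerp d g i * a * e / shear a e (lerp d g i)) (i * b * e / shear b e i)
        (d * g / lerp d g i) / (i * b * e / shear b e i) =
      shear a b d / b * (shear (d * a * b / shear a b d) e g / e) /
        lerp (shear a b d / b) (shear (d * a * b / shear a b d) e g / e) (shear b e i / e) := by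
  rw [← shear_div_eq_lerp a b e d g i hb hm, div_eq_div_iff (by positivity) (by positivity)]
  linear_combination (norm := (field_simp; ring))
    (1 / (b * e)) * shear_div_div_div_mul a b e d g i hm hR hn₁ hn₂

theorem mul_mul_div_shear (a b e d g i : K) (hm : shear a b d ≠ 0) (hR : lerp d g i ≠ 0)
    (hn₁ : shear b e i ≠ 0) (hn₂ : shear a e (lerp d g i) ≠ 0)
    (hn₃ : shear (lerp d g i * a * e / shear a e (lerp d g i)) (i * b * e / shear b e i)
      (d * g / lerp d g i) ≠ 0)
    (hm₂ : shear (d * a * b / shear a b d) e g ≠ 0) :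
    d * g / lerp d g i * (lerp d g i * a * e / shear a e (lerp d g i)) *
        (i * b * e / shear b e i) /
        shear (lerp d g i * a * e / shear a e (lerp d g i)) (i * b * e / shear b e i)
          (d * g / lerp d g i) =
      g * (d * a * b / shear a b d) * e / shear (d * a * b / shear a b d) e g := by
  rw [div_eq_div_iff hn₃ hm₂]
  linear_combination (norm := (field_simp; ring))
    (-(g * d * a * e) / (shear a b d * shear a e (lerp d g i))) *
      shear_div_div_div_mul a b e d g i hm hR hn₁ hn₂

end RationalIdentities

/-- The map S : (ℂ²)⁴ → (ℂ²)⁴,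
S(x₁,x₂,y₁,y₂,z₁,z₂,t₁,t₂) = (x₁y₁/(x₁y₁+z₁−x₁z₁), t₁x₂y₂/(y₂+t₁x₂−x₂),
x₁y₁+z₁−x₁z₁, y₂, z₁, t₂, (y₂+t₁x₂−x₂)/y₂, z₂), is a 4-simplex map:
it satisfies the 4-simplex equation at every point of (ℂ²)¹⁰ at which all
denominators occurring in both composed sides are nonzero. -/
theorem Sc_is_4simplex (p : P C2)
    (hL : lhsDom DomC Sc p) (hR : rhsDom DomC Sc p) :
    lhs Sc p = rhs Sc p := by
  obtain ⟨⟨a1, a2⟩, ⟨b1, b2⟩, ⟨c1, c2⟩, ⟨d1, d2⟩, ⟨e1, e2⟩, ⟨f1, f2⟩, ⟨g1, g2⟩, ⟨h1, h2⟩,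
    ⟨i1, i2⟩, ⟨j1, j2⟩⟩ := p
  simp only [lhsDom, rhsDom, app1234, app1567, app2589, app368X, app479X,
    proj1234, proj1567, proj2589, proj368X, proj479X, Sc, DomC] at hL hR
  obtain ⟨⟨_, _, _⟩, ⟨_, _, _⟩, ⟨_, _, _⟩, ⟨_, _, _⟩, ⟨_, _, hb'⟩⟩ := hL
  obtain ⟨⟨_, _, _⟩, ⟨_, _, _⟩, ⟨_, _, _⟩, ⟨_, _, _⟩, ⟨_, _, _⟩⟩ := hR
  have hi : i1 ≠ 0 := by rintro rfl; simp at hb'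
  simp only [lhs, rhs, Function.comp, app1234, app1567, app2589, app368X, app479X, Sc,
    Prod.mk.injEq, and_true, true_and]
  refine ⟨⟨mul_div_lerp_div_div_div a1 b1 c1 e1 f1 h1 ?_ ?_ ?_ ?_,
      mul_mul_div_shear a2 b2 e2 d1 g1 i1 ?_ ?_ ?_ ?_ ?_ ?_⟩,
    lerp_div_div_div a1 b1 c1 e1 f1 h1 ?_ ?_ ?_ ?_,
    shear_div_div_div_div a2 b2 e2 d1 g1 i1 ?_ ?_ hi ?_ ?_ ?_ ?_,
    lerp_lerp_lerp a1 b1 c1 e1 f1 h1 ?_,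
    shear_div_eq_lerp a2 b2 e2 d1 g1 i1 ?_ ?_⟩ <;> assumption

end Paper4Simplex
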